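/- arXiv:2008.09796 — 6 statements merged into one kernel-verified Lean document; each statement's English description precedes it below -/
import Mathlib

section
/- For any permutation π of the three players {1,2,3} and any 3PG state S, the unique value function f satisfies f(π·S) = f(S), where π·S is the state obtained from S by renaming each player i to π(i) both in the recorded win-lose relations and in the pair of players in the ring. -/
/-- A state of the three-player game (3PG): `beats i j` records whether the event
"player `i` has beaten player `j`" has occurred, and `ring` is the (unordered)
pair of the two players currently in the ring. -/
structure PGState where
  beats : Fin 3 → Fin 3 → Bool
  ring : Finset (Fin 3)
  card_ring : ring.card = 2

/-- A state is terminal if all six win-lose relations have occurred. -/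
def PGState.Terminal (S : PGState) : Prop :=
  ∀ i j : Fin 3, i ≠ j → S.beats i j = true

/-- The successor state in which player `w` beats player `l` in the current round
and the third player `t` enters the ring. -/
def PGState.succ (S : PGState) (w l t : Fin 3) (hwt : w ≠ t) : PGState :=
  ⟨fun i j => if i = w ∧ j = l then true else S.beats i j, {w, t}, Finset.card_pair hwt⟩

/-- `f` is a value function for the 3PG: it vanishes on terminal states and
satisfies the reduction rule `f S = 1 + (f S₁ + f S₂)/2` on non-terminal states,
where `S₁` and `S₂` are the two successors of `S`. -/
def IsValueFn (f : PGState → ℝ) : Prop :=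
  (∀ S : PGState, S.Terminal → f S = 0) ∧
  ∀ (S : PGState) (t₁ t₂ t₃ : Fin 3) (_ : t₁ ≠ t₂) (h₁₃ : t₁ ≠ t₃) (h₂₃ : t₂ ≠ t₃),
    S.ring = {t₁, t₂} → ¬ S.Terminal →
    f S = 1 + (f (S.succ t₁ t₂ t₃ h₁₃) + f (S.succ t₂ t₁ t₃ h₂₃)) / 2

/-- The win-lose record `(b₁b₂b₃b₄b₅b₆)`, where the six bits indicate whether the
relations "1 beats 2", "2 beats 1", "1 beats 3", "3 beats 1", "2 beats 3",
"3 beats 2" have occurred (players 1, 2, 3 are `0, 1, 2 : Fin 3`). -/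
def mkBeats (b₁ b₂ b₃ b₄ b₅ b₆ : Bool) : Fin 3 → Fin 3 → Bool := fun i j =>
  if i = 0 ∧ j = 1 then b₁
  else if i = 1 ∧ j = 0 then b₂
  else if i = 0 ∧ j = 2 then b₃
  else if i = 2 ∧ j = 0 then b₄
  else if i = 1 ∧ j = 2 then b₅
  else if i = 2 ∧ j = 1 then b₆
  else false

/-- The state `(b₁b₂b₃b₄b₅b₆ | {t₁, t₂})`. -/
def mkState (b₁ b₂ b₃ b₄ b₅ b₆ : Bool) (t₁ t₂ : Fin 3) (h : t₁ ≠ t₂ := by decide) :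
    PGState :=
  ⟨mkBeats b₁ b₂ b₃ b₄ b₅ b₆, {t₁, t₂}, Finset.card_pair h⟩

/-- The action of a permutation `π` of the players on a state: the Boolean recorded
at `(i, j)` becomes the one previously recorded at `(π⁻¹ i, π⁻¹ j)`, and the ring
pair `{t₁, t₂}` becomes `{π t₁, π t₂}`. -/
def permState (π : Equiv.Perm (Fin 3)) (S : PGState) : PGState :=
  ⟨fun i j => S.beats (π.symm i) (π.symm j), S.ring.image π, by
    rw [Finset.card_image_of_injective _ π.injective, S.card_ring]⟩

-- Auxiliary lemmas

lemma PGState.ext' {S T : PGState} (hb : S.beats = T.beats) (hr : S.ring = T.ring) : S = T := by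
  cases S; cases T; simp_all

lemma permState_terminal (π : Equiv.Perm (Fin 3)) (S : PGState) :
    (permState π S).Terminal ↔ S.Terminal := by
  constructor
  · intro h i j hij
    have := h (π i) (π j) (fun hc => hij (π.injective hc))
    simpa [permState] using this
  · intro h i j hij
    exact h _ _ (fun hc => hij (π.symm.injective hc))

lemma permState_succ (π : Equiv.Perm (Fin 3)) (S : PGState) (w l t : Fin 3) (hwt : w ≠ t)
    (hwt' : π w ≠ π t) :
    permState π (S.succ w l t hwt) = (permState π S).succ (π w) (π l) (π t) hwt' := by
  apply PGState.ext'
  · funext i j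
    simp only [permState, PGState.succ, Equiv.symm_apply_eq]
  · simp [permState, PGState.succ, Finset.image_insert]

def falseCount (b : Fin 3 → Fin 3 → Bool) : ℕ :=
  (Finset.univ.filter (fun p : Fin 3 × Fin 3 => p.1 ≠ p.2 ∧ b p.1 p.2 = false)).card

lemma falseCount_lt (b : Fin 3 → Fin 3 → Bool) (w l : Fin 3) (hwl : w ≠ l)
    (hb : b w l = false) :
    falseCount (fun i j => if i = w ∧ j = l then true else b i j) < falseCount b := by
  apply Finset.card_lt_card
  constructor
  · intro p hp
    simp only [Finset.mem_filter, Finset.mem_univ, true_and] at *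
    obtain ⟨hne, hf⟩ := hp
    refine ⟨hne, ?_⟩
    by_cases hc : p.1 = w ∧ p.2 = l
    · simp [hc] at hf
    · simpa [hc] using hf
  · intro hsub
    have hm : (w, l) ∈ Finset.univ.filter
        (fun p : Fin 3 × Fin 3 => p.1 ≠ p.2 ∧ b p.1 p.2 = false) := by
      simp [hwl, hb]
    have := hsub hm
    simp at this

lemma succ_same (S : PGState) (w l t : Fin 3) (hwt : w ≠ t) (hb : S.beats w l = true) :
    S.succ w l t hwt = ⟨S.beats, {w, t}, Finset.card_pair hwt⟩ := by
  apply PGState.ext'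
  · funext i j
    by_cases hc : i = w ∧ j = l
    · obtain ⟨h1, h2⟩ := hc; simp [PGState.succ, h1, h2, hb]
    · simp [PGState.succ, hc]
  · rfl

lemma value_perm_rec (f : PGState → ℝ) (hf : IsValueFn f) (π : Equiv.Perm (Fin 3))
    (S : PGState) (t₁ t₂ t₃ : Fin 3) (h12 : t₁ ≠ t₂) (h13 : t₁ ≠ t₃) (h23 : t₂ ≠ t₃)
    (hr : S.ring = {t₁, t₂}) (hnt : ¬ S.Terminal) :
    f (permState π S) - f S =
      ((f (permState π (S.succ t₁ t₂ t₃ h13)) - f (S.succ t₁ t₂ t₃ h13)) +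
       (f (permState π (S.succ t₂ t₁ t₃ h23)) - f (S.succ t₂ t₁ t₃ h23))) / 2 := by
  have e1 := hf.2 S t₁ t₂ t₃ h12 h13 h23 hr hnt
  have e2 := hf.2 (permState π S) (π t₁) (π t₂) (π t₃)
      (fun hc => h12 (π.injective hc)) (fun hc => h13 (π.injective hc))
      (fun hc => h23 (π.injective hc))
      (by simp [permState, hr, Finset.image_insert])
      (fun h => hnt ((permState_terminal π S).mp h))
  rw [← permState_succ π S t₁ t₂ t₃ h13, ← permState_succ π S t₂ t₁ t₃ h23] at e2
  linarith

set_option maxHeartbeats 2000000 in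
lemma sys_zero (a b c : ℝ) (x1 x2 x3 x4 x5 x6 : Bool)
    (hx : ¬(x1 = true ∧ x2 = true ∧ x3 = true ∧ x4 = true ∧ x5 = true ∧ x6 = true))
    (eA : a = ((if x1 = true then b else 0) + (if x2 = true then c else 0)) / 2)
    (eB : b = ((if x3 = true then a else 0) + (if x4 = true then c else 0)) / 2)
    (eC : c = ((if x5 = true then a else 0) + (if x6 = true then b else 0)) / 2) :
    a = 0 ∧ b = 0 ∧ c = 0 := by
  cases x1 <;> cases x2 <;> cases x3 <;> cases x4 <;> cases x5 <;> cases x6 <;>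
    simp only [Bool.false_eq_true, eq_self_iff_true, if_true, if_false,
      ite_true, ite_false] at eA eB eC <;>
    first
      | (exfalso; revert hx; decide)
      | refine ⟨by linarith, by linarith, by linarith⟩

set_option maxHeartbeats 1000000 in
/-- The value function of the 3PG is invariant under renaming the players. -/
theorem threePG_value_perm_invariant (f : PGState → ℝ) (hf : IsValueFn f)
    (π : Equiv.Perm (Fin 3)) (S : PGState) :
    f (permState π S) = f S := by
  have key : ∀ n : ℕ, ∀ S : PGState, falseCount S.beats ≤ n →
      f (permState π S) - f S = 0 := by
    intro n
    induction n with
    | zero =>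
      intro S hS
      have hT : S.Terminal := by
        intro i j hij
        by_contra hb
        have hb' : S.beats i j = false := Bool.eq_false_iff.mpr hb
        have hm : (i, j) ∈ Finset.univ.filter
            (fun p : Fin 3 × Fin 3 => p.1 ≠ p.2 ∧ S.beats p.1 p.2 = false) := by
          simp [hij, hb']
        have hpos : 0 < falseCount S.beats := Finset.card_pos.mpr ⟨_, hm⟩
        omega
      rw [hf.1 S hT, hf.1 _ ((permState_terminal π S).mpr hT)]
      ring
    | succ n ih =>
      intro S hS
      by_cases hT : S.Terminal
      · rw [hf.1 S hT, hf.1 _ ((permState_terminal π S).mpr hT)]; ring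
      have p01 : (0 : Fin 3) ≠ 1 := by decide
      have p02 : (0 : Fin 3) ≠ 2 := by decide
      have p12 : (1 : Fin 3) ≠ 2 := by decide
      have p10 : (1 : Fin 3) ≠ 0 := by decide
      have p20 : (2 : Fin 3) ≠ 0 := by decide
      have p21 : (2 : Fin 3) ≠ 1 := by decide
      have c01 : ({0, 1} : Finset (Fin 3)).card = 2 := by decide
      have c02 : ({0, 2} : Finset (Fin 3)).card = 2 := by decide
      have c12 : ({1, 2} : Finset (Fin 3)).card = 2 := by decide
      have r21 : ({2, 1} : Finset (Fin 3)) = {1, 2} := by decide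
      have r10 : ({1, 0} : Finset (Fin 3)) = {0, 1} := by decide
      have r20 : ({2, 0} : Finset (Fin 3)) = {0, 2} := by decide
      let A : PGState := ⟨S.beats, {0, 1}, c01⟩
      let B : PGState := ⟨S.beats, {0, 2}, c02⟩
      let C : PGState := ⟨S.beats, {1, 2}, c12⟩
      have hntA : ¬ A.Terminal := fun h => hT (fun i j hij => h i j hij)
      have hntB : ¬ B.Terminal := fun h => hT (fun i j hij => h i j hij)
      have hntC : ¬ C.Terminal := fun h => hT (fun i j hij => h i j hij)
      have hzero : ∀ (X : PGState) (w l t : Fin 3) (hwt : w ≠ t), X.beats = S.beats →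
          w ≠ l → S.beats w l = false →
          f (permState π (X.succ w l t hwt)) - f (X.succ w l t hwt) = 0 := by
        intro X w l t hwt hX hwl hb
        apply ih
        apply Nat.lt_succ_iff.mp
        apply lt_of_lt_of_le _ hS
        have hbe : (X.succ w l t hwt).beats
            = fun i j => if i = w ∧ j = l then true else S.beats i j := by
          rw [← hX]; rfl
        rw [hbe]
        exact falseCount_lt S.beats w l hwl hb
      have w1 : f (permState π (A.succ 0 1 2 p02)) - f (A.succ 0 1 2 p02) =
          (if S.beats 0 1 = true then f (permState π B) - f B else 0) := by
        by_cases hb : S.beats 0 1 = true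
        · rw [if_pos hb, show A.succ 0 1 2 p02 = B from
            (succ_same A 0 1 2 p02 hb).trans (PGState.ext' rfl rfl)]
        · rw [if_neg hb]; exact hzero A 0 1 2 p02 rfl p01 (Bool.eq_false_iff.mpr hb)
      have w2 : f (permState π (A.succ 1 0 2 p12)) - f (A.succ 1 0 2 p12) =
          (if S.beats 1 0 = true then f (permState π C) - f C else 0) := by
        by_cases hb : S.beats 1 0 = true
        · rw [if_pos hb, show A.succ 1 0 2 p12 = C from
            (succ_same A 1 0 2 p12 hb).trans (PGState.ext' rfl rfl)]
        · rw [if_neg hb]; exact hzero A 1 0 2 p12 rfl p10 (Bool.eq_false_iff.mpr hb)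
      have w3 : f (permState π (B.succ 0 2 1 p01)) - f (B.succ 0 2 1 p01) =
          (if S.beats 0 2 = true then f (permState π A) - f A else 0) := by
        by_cases hb : S.beats 0 2 = true
        · rw [if_pos hb, show B.succ 0 2 1 p01 = A from
            (succ_same B 0 2 1 p01 hb).trans (PGState.ext' rfl rfl)]
        · rw [if_neg hb]; exact hzero B 0 2 1 p01 rfl p02 (Bool.eq_false_iff.mpr hb)
      have w4 : f (permState π (B.succ 2 0 1 p21)) - f (B.succ 2 0 1 p21) =
          (if S.beats 2 0 = true then f (permState π C) - f C else 0) := by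
        by_cases hb : S.beats 2 0 = true
        · rw [if_pos hb, show B.succ 2 0 1 p21 = C from
            (succ_same B 2 0 1 p21 hb).trans (PGState.ext' rfl r21)]
        · rw [if_neg hb]; exact hzero B 2 0 1 p21 rfl p20 (Bool.eq_false_iff.mpr hb)
      have w5 : f (permState π (C.succ 1 2 0 p10)) - f (C.succ 1 2 0 p10) =
          (if S.beats 1 2 = true then f (permState π A) - f A else 0) := by
        by_cases hb : S.beats 1 2 = true
        · rw [if_pos hb, show C.succ 1 2 0 p10 = A from
            (succ_same C 1 2 0 p10 hb).trans (PGState.ext' rfl r10)]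
        · rw [if_neg hb]; exact hzero C 1 2 0 p10 rfl p12 (Bool.eq_false_iff.mpr hb)
      have w6 : f (permState π (C.succ 2 1 0 p20)) - f (C.succ 2 1 0 p20) =
          (if S.beats 2 1 = true then f (permState π B) - f B else 0) := by
        by_cases hb : S.beats 2 1 = true
        · rw [if_pos hb, show C.succ 2 1 0 p20 = B from
            (succ_same C 2 1 0 p20 hb).trans (PGState.ext' rfl r20)]
        · rw [if_neg hb]; exact hzero C 2 1 0 p20 rfl p21 (Bool.eq_false_iff.mpr hb)
      have eA := value_perm_rec f hf π A 0 1 2 p01 p02 p12 rfl hntA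
      have eB := value_perm_rec f hf π B 0 2 1 p02 p01 p21 rfl hntB
      have eC := value_perm_rec f hf π C 1 2 0 p12 p10 p20 rfl hntC
      rw [w1, w2] at eA
      rw [w3, w4] at eB
      rw [w5, w6] at eC
      have hx : ¬(S.beats 0 1 = true ∧ S.beats 1 0 = true ∧ S.beats 0 2 = true ∧
          S.beats 2 0 = true ∧ S.beats 1 2 = true ∧ S.beats 2 1 = true) := by
        intro hall
        obtain ⟨h1, h2, h3, h4, h5, h6⟩ := hall
        apply hT
        intro i j hij
        fin_cases i <;> fin_cases j <;>
          first
            | exact absurd rfl hij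
            | exact h1 | exact h2 | exact h3 | exact h4 | exact h5 | exact h6
      have key3 := sys_zero (f (permState π A) - f A) (f (permState π B) - f B)
        (f (permState π C) - f C) (S.beats 0 1) (S.beats 1 0) (S.beats 0 2)
        (S.beats 2 0) (S.beats 1 2) (S.beats 2 1) hx eA eB eC
      have hring : S.ring = {0, 1} ∨ S.ring = {0, 2} ∨ S.ring = {1, 2} := by
        have hall : ∀ r : Finset (Fin 3), r.card = 2 →
            r = {0, 1} ∨ r = {0, 2} ∨ r = {1, 2} := by decide
        exact hall S.ring S.card_ring
      rcases hring with hr | hr | hr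
      · rw [show S = A from PGState.ext' rfl hr]; exact key3.1
      · rw [show S = B from PGState.ext' rfl hr]; exact key3.2.1
      · rw [show S = C from PGState.ext' rfl hr]; exact key3.2.2
  have hfin := key (falseCount S.beats) S le_rfl
  linarith
end

section
/- (Proposition B) For the unique value function f of the 3PG, f(111100 | {2,3}) = 7; i.e., in the state where exactly the relations '2 beats 3' and '3 beats 2' are missing and players 2 and 3 are in the ring, the value is 7. -/
instance (S : PGState) : Decidable S.Terminal :=
  inferInstanceAs (Decidable (∀ i j : Fin 3, i ≠ j → S.beats i j = true))

lemma pg_ext : ∀ {S T : PGState}, S.beats = T.beats → S.ring = T.ring → S = T := by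
  rintro ⟨b, r, h⟩ ⟨b', r', h'⟩ rfl rfl
  rfl

/-- Proposition B: `f(111100|{2,3}) = 7`. -/
theorem threePG_propB (f : PGState → ℝ) (hf : IsValueFn f) :
    f (mkState true true true true false false 1 2) = 7 := by
  obtain ⟨h0, h1⟩ := hf
  -- abbreviations
  set S := mkState true true true true false false 1 2 with hS
  set A := mkState true true true true true false 1 0 with hA
  set A₁ := mkState true true true true true false 1 2 with hA₁
  set A₂ := mkState true true true true true false 0 2 with hA₂
  set B := mkState true true true true false true 2 0 with hB
  set B₁ := mkState true true true true false true 2 1 with hB₁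
  set B₂ := mkState true true true true false true 0 1 with hB₂
  have eqS : f S = 1 + (f A + f B) / 2 := by
    have h := h1 S 1 2 0 (by decide) (by decide) (by decide) rfl (by decide)
    rw [h, show S.succ 1 2 0 (by decide) = A from pg_ext (by decide) (by decide),
      show S.succ 2 1 0 (by decide) = B from pg_ext (by decide) (by decide)]
  have eqA : f A = 1 + (f A₁ + f A₂) / 2 := by
    have h := h1 A 1 0 2 (by decide) (by decide) (by decide) rfl (by decide)
    rw [h, show A.succ 1 0 2 (by decide) = A₁ from pg_ext (by decide) (by decide),
      show A.succ 0 1 2 (by decide) = A₂ from pg_ext (by decide) (by decide)]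
  have eqA₁ : f A₁ = 1 + (f A + 0) / 2 := by
    have h := h1 A₁ 1 2 0 (by decide) (by decide) (by decide) rfl (by decide)
    rw [h, show A₁.succ 1 2 0 (by decide) = A from pg_ext (by decide) (by decide),
      h0 (A₁.succ 2 1 0 (by decide)) (by decide)]
  have eqA₂ : f A₂ = 1 + (f A + f A₁) / 2 := by
    have h := h1 A₂ 0 2 1 (by decide) (by decide) (by decide) rfl (by decide)
    rw [h, show A₂.succ 0 2 1 (by decide) = A from pg_ext (by decide) (by decide),
      show A₂.succ 2 0 1 (by decide) = A₁ from pg_ext (by decide) (by decide)]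
  have eqB : f B = 1 + (f B₁ + f B₂) / 2 := by
    have h := h1 B 2 0 1 (by decide) (by decide) (by decide) rfl (by decide)
    rw [h, show B.succ 2 0 1 (by decide) = B₁ from pg_ext (by decide) (by decide),
      show B.succ 0 2 1 (by decide) = B₂ from pg_ext (by decide) (by decide)]
  have eqB₁ : f B₁ = 1 + (f B + 0) / 2 := by
    have h := h1 B₁ 2 1 0 (by decide) (by decide) (by decide) rfl (by decide)
    rw [h, show B₁.succ 2 1 0 (by decide) = B from pg_ext (by decide) (by decide),
      h0 (B₁.succ 1 2 0 (by decide)) (by decide)]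
  have eqB₂ : f B₂ = 1 + (f B + f B₁) / 2 := by
    have h := h1 B₂ 0 1 2 (by decide) (by decide) (by decide) rfl (by decide)
    rw [h, show B₂.succ 0 1 2 (by decide) = B from pg_ext (by decide) (by decide),
      show B₂.succ 1 0 2 (by decide) = B₁ from pg_ext (by decide) (by decide)]
  linarith
end

section
/- (Proposition C) For the unique value function f of the 3PG, f(111100 | {1,3}) = 9 and f(111100 | {1,2}) = 9; i.e., in the states where exactly the relations '2 beats 3' and '3 beats 2' are missing and the ring is {1,3} or {1,2}, the value is 9. -/
def SA : PGState := mkState true true true true false false 0 2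
def SB : PGState := mkState true true true true false false 0 1
def SC : PGState := mkState true true true true false false 1 2
def SD : PGState := mkState true true true true true false 0 1
def SD' : PGState := mkState true true true true true false 0 2
def SD'' : PGState := mkState true true true true true false 1 2
def SE : PGState := mkState true true true true false true 0 2
def SE' : PGState := mkState true true true true false true 0 1
def SE'' : PGState := mkState true true true true false true 1 2

lemma step (f : PGState → ℝ) (hf : IsValueFn f) (S S₁ S₂ : PGState) (t₁ t₂ t₃ : Fin 3)
    (h12 : t₁ ≠ t₂) (h13 : t₁ ≠ t₃) (h23 : t₂ ≠ t₃)
    (hr : S.ring = {t₁, t₂}) (hnt : ¬ S.Terminal)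
    (e1 : S.succ t₁ t₂ t₃ h13 = S₁) (e2 : S.succ t₂ t₁ t₃ h23 = S₂) :
    f S = 1 + (f S₁ + f S₂) / 2 := by
  rw [← e1, ← e2]; exact hf.2 S t₁ t₂ t₃ h12 h13 h23 hr hnt

/-- Proposition C: `f(111100|{1,3}) = 9` and `f(111100|{1,2}) = 9`. -/
theorem threePG_propC (f : PGState → ℝ) (hf : IsValueFn f) :
    f (mkState true true true true false false 0 2) = 9 ∧
    f (mkState true true true true false false 0 1) = 9 := by
  show f SA = 9 ∧ f SB = 9
  have hntA : ¬ SA.Terminal := fun h => by simpa [SA, mkState, mkBeats] using h 1 2 (by decide)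
  have hntB : ¬ SB.Terminal := fun h => by simpa [SB, mkState, mkBeats] using h 1 2 (by decide)
  have hntC : ¬ SC.Terminal := fun h => by simpa [SC, mkState, mkBeats] using h 1 2 (by decide)
  have hntD : ¬ SD.Terminal := fun h => by simpa [SD, mkState, mkBeats] using h 2 1 (by decide)
  have hntD' : ¬ SD'.Terminal := fun h => by simpa [SD', mkState, mkBeats] using h 2 1 (by decide)
  have hntD'' : ¬ SD''.Terminal := fun h => by simpa [SD'', mkState, mkBeats] using h 2 1 (by decide)
  have hntE : ¬ SE.Terminal := fun h => by simpa [SE, mkState, mkBeats] using h 1 2 (by decide)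
  have hntE' : ¬ SE'.Terminal := fun h => by simpa [SE', mkState, mkBeats] using h 1 2 (by decide)
  have hntE'' : ¬ SE''.Terminal := fun h => by simpa [SE'', mkState, mkBeats] using h 1 2 (by decide)
  have eqA : f SA = 1 + (f SB + f SC) / 2 :=
    step f hf SA SB SC 0 2 1 (by decide) (by decide) (by decide) rfl hntA
      (PGState.ext' (by decide) (by decide)) (PGState.ext' (by decide) (by decide))
  have eqB : f SB = 1 + (f SA + f SC) / 2 :=
    step f hf SB SA SC 0 1 2 (by decide) (by decide) (by decide) rfl hntB
      (PGState.ext' (by decide) (by decide)) (PGState.ext' (by decide) (by decide))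
  have eqC : f SC = 1 + (f SD + f SE) / 2 :=
    step f hf SC SD SE 1 2 0 (by decide) (by decide) (by decide) rfl hntC
      (PGState.ext' (by decide) (by decide)) (PGState.ext' (by decide) (by decide))
  have eqD : f SD = 1 + (f SD' + f SD'') / 2 :=
    step f hf SD SD' SD'' 0 1 2 (by decide) (by decide) (by decide) rfl hntD
      (PGState.ext' (by decide) (by decide)) (PGState.ext' (by decide) (by decide))
  have eqD' : f SD' = 1 + (f SD + f SD'') / 2 :=
    step f hf SD' SD SD'' 0 2 1 (by decide) (by decide) (by decide) rfl hntD'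
      (PGState.ext' (by decide) (by decide)) (PGState.ext' (by decide) (by decide))
  have eqE : f SE = 1 + (f SE' + f SE'') / 2 :=
    step f hf SE SE' SE'' 0 2 1 (by decide) (by decide) (by decide) rfl hntE
      (PGState.ext' (by decide) (by decide)) (PGState.ext' (by decide) (by decide))
  have eqE' : f SE' = 1 + (f SE + f SE'') / 2 :=
    step f hf SE' SE SE'' 0 1 2 (by decide) (by decide) (by decide) rfl hntE'
      (PGState.ext' (by decide) (by decide)) (PGState.ext' (by decide) (by decide))
  have eqD'' : f SD'' = 1 + (f SD + f (SD''.succ 2 1 0 (by decide))) / 2 :=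
    step f hf SD'' SD _ 1 2 0 (by decide) (by decide) (by decide) rfl hntD''
      (PGState.ext' (by decide) (by decide)) rfl
  have eqE'' : f SE'' = 1 + (f (SE''.succ 1 2 0 (by decide)) + f SE) / 2 :=
    step f hf SE'' _ SE 1 2 0 (by decide) (by decide) (by decide) rfl hntE''
      rfl (PGState.ext' (by decide) (by decide))
  have hTD : f (SD''.succ 2 1 0 (by decide)) = 0 := by
    apply hf.1
    intro i j hij
    revert hij
    show i ≠ j → (SD''.succ 2 1 0 (by decide)).beats i j = true
    fin_cases i <;> fin_cases j <;> decide
  have hTE : f (SE''.succ 1 2 0 (by decide)) = 0 := by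
    apply hf.1
    intro i j hij
    revert hij
    show i ≠ j → (SE''.succ 1 2 0 (by decide)).beats i j = true
    fin_cases i <;> fin_cases j <;> decide
  rw [hTD] at eqD''
  rw [hTE] at eqE''
  constructor <;> linarith
end

section
/- (Proposition F) For the unique value function f of the 3PG, f(011101 | {1,2}) = 38/5, f(011101 | {2,3}) = 36/5, and f(011101 | {1,3}) = 42/5; i.e., in the states where exactly the relations '1 beats 2' and '2 beats 3' are missing, the value is 38/5, 36/5, 42/5 according as the ring is {1,2}, {2,3}, {1,3}. -/
/-- Proposition F: `f(011101|{1,2}) = 38/5`, `f(011101|{2,3}) = 36/5`,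
`f(011101|{1,3}) = 42/5`. -/
theorem threePG_propF (f : PGState → ℝ) (hf : IsValueFn f) :
    f (mkState false true true true false true 0 1) = 38 / 5 ∧
    f (mkState false true true true false true 1 2) = 36 / 5 ∧
    f (mkState false true true true false true 0 2) = 42 / 5 := by
  have eA := hf.2 (mkState false true true true false true 0 1) 0 1 2 (by decide) (by decide) (by decide) rfl (by decide)
  rw [show (mkState false true true true false true 0 1).succ 0 1 2 (by decide) = mkState true true true true false true 0 2 from PGState.ext' (by decide) (by decide),
      show (mkState false true true true false true 0 1).succ 1 0 2 (by decide) = mkState false true true true false true 1 2 from PGState.ext' (by decide) (by decide)] at eA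
  have eC := hf.2 (mkState false true true true false true 1 2) 1 2 0 (by decide) (by decide) (by decide) rfl (by decide)
  rw [show (mkState false true true true false true 1 2).succ 1 2 0 (by decide) = mkState false true true true true true 0 1 from PGState.ext' (by decide) (by decide),
      show (mkState false true true true false true 1 2).succ 2 1 0 (by decide) = mkState false true true true false true 0 2 from PGState.ext' (by decide) (by decide)] at eC
  have eD := hf.2 (mkState false true true true false true 0 2) 0 2 1 (by decide) (by decide) (by decide) rfl (by decide)
  rw [show (mkState false true true true false true 0 2).succ 0 2 1 (by decide) = mkState false true true true false true 0 1 from PGState.ext' (by decide) (by decide),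
      show (mkState false true true true false true 0 2).succ 2 0 1 (by decide) = mkState false true true true false true 1 2 from PGState.ext' (by decide) (by decide)] at eD
  have eu := hf.2 (mkState true true true true false true 1 2) 1 2 0 (by decide) (by decide) (by decide) rfl (by decide)
  rw [show (mkState true true true true false true 1 2).succ 1 2 0 (by decide) = mkState true true true true true true 0 1 from PGState.ext' (by decide) (by decide),
      show (mkState true true true true false true 1 2).succ 2 1 0 (by decide) = mkState true true true true false true 0 2 from PGState.ext' (by decide) (by decide)] at eu
  have ev := hf.2 (mkState true true true true false true 0 2) 0 2 1 (by decide) (by decide) (by decide) rfl (by decide)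
  rw [show (mkState true true true true false true 0 2).succ 0 2 1 (by decide) = mkState true true true true false true 0 1 from PGState.ext' (by decide) (by decide),
      show (mkState true true true true false true 0 2).succ 2 0 1 (by decide) = mkState true true true true false true 1 2 from PGState.ext' (by decide) (by decide)] at ev
  have ew := hf.2 (mkState true true true true false true 0 1) 0 1 2 (by decide) (by decide) (by decide) rfl (by decide)
  rw [show (mkState true true true true false true 0 1).succ 0 1 2 (by decide) = mkState true true true true false true 0 2 from PGState.ext' (by decide) (by decide),
      show (mkState true true true true false true 0 1).succ 1 0 2 (by decide) = mkState true true true true false true 1 2 from PGState.ext' (by decide) (by decide)] at ew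
  have ep := hf.2 (mkState false true true true true true 0 1) 0 1 2 (by decide) (by decide) (by decide) rfl (by decide)
  rw [show (mkState false true true true true true 0 1).succ 0 1 2 (by decide) = mkState true true true true true true 0 2 from PGState.ext' (by decide) (by decide),
      show (mkState false true true true true true 0 1).succ 1 0 2 (by decide) = mkState false true true true true true 1 2 from PGState.ext' (by decide) (by decide)] at ep
  have eq' := hf.2 (mkState false true true true true true 1 2) 1 2 0 (by decide) (by decide) (by decide) rfl (by decide)
  rw [show (mkState false true true true true true 1 2).succ 1 2 0 (by decide) = mkState false true true true true true 0 1 from PGState.ext' (by decide) (by decide),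
      show (mkState false true true true true true 1 2).succ 2 1 0 (by decide) = mkState false true true true true true 0 2 from PGState.ext' (by decide) (by decide)] at eq'
  have er := hf.2 (mkState false true true true true true 0 2) 0 2 1 (by decide) (by decide) (by decide) rfl (by decide)
  rw [show (mkState false true true true true true 0 2).succ 0 2 1 (by decide) = mkState false true true true true true 0 1 from PGState.ext' (by decide) (by decide),
      show (mkState false true true true true true 0 2).succ 2 0 1 (by decide) = mkState false true true true true true 1 2 from PGState.ext' (by decide) (by decide)] at er
  have z1 := hf.1 (mkState true true true true true true 0 1) (by decide)
  have z2 := hf.1 (mkState true true true true true true 0 2) (by decide)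
  refine ⟨by linarith, by linarith, by linarith⟩
end

section
/- For the unique value function f of the 3PG, f(111000 | {2,3}) = 43/5; i.e., in the state where exactly the relations '1 beats 2', '2 beats 1' and '1 beats 3' have occurred and players 2 and 3 are in the ring, the value is 43/5. -/
lemma state_eq (S T : PGState) (hb : S.beats = T.beats) (hr : S.ring = T.ring) : S = T := by
  cases S; cases T; simp_all

/-- `f(111000|{2,3}) = 43/5`. -/
theorem threePG_111000_23 (f : PGState → ℝ) (hf : IsValueFn f) :
    f (mkState true true true false false false 1 2) = 43 / 5 := by
  have e0_0 : (mkState true true true false false false 1 2).succ 1 2 0 (by decide) = mkState true true true false true false 0 1 := state_eq _ _ (by decide) (by decide)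
  have e0_1 : (mkState true true true false false false 1 2).succ 2 1 0 (by decide) = mkState true true true false false true 0 2 := state_eq _ _ (by decide) (by decide)
  have h0 := hf.2 (mkState true true true false false false 1 2) 1 2 0 (by decide) (by decide) (by decide) rfl (by decide)
  rw [e0_0, e0_1] at h0
  have e1_0 : (mkState true true true false true false 0 1).succ 0 1 2 (by decide) = mkState true true true false true false 0 2 := state_eq _ _ (by decide) (by decide)
  have e1_1 : (mkState true true true false true false 0 1).succ 1 0 2 (by decide) = mkState true true true false true false 1 2 := state_eq _ _ (by decide) (by decide)
  have h1 := hf.2 (mkState true true true false true false 0 1) 0 1 2 (by decide) (by decide) (by decide) rfl (by decide)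
  rw [e1_0, e1_1] at h1
  have e2_0 : (mkState true true true false false true 0 2).succ 0 2 1 (by decide) = mkState true true true false false true 0 1 := state_eq _ _ (by decide) (by decide)
  have e2_1 : (mkState true true true false false true 0 2).succ 2 0 1 (by decide) = mkState true true true true false true 1 2 := state_eq _ _ (by decide) (by decide)
  have h2 := hf.2 (mkState true true true false false true 0 2) 0 2 1 (by decide) (by decide) (by decide) rfl (by decide)
  rw [e2_0, e2_1] at h2
  have e3_0 : (mkState true true true false true false 0 2).succ 0 2 1 (by decide) = mkState true true true false true false 0 1 := state_eq _ _ (by decide) (by decide)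
  have e3_1 : (mkState true true true false true false 0 2).succ 2 0 1 (by decide) = mkState true true true true true false 1 2 := state_eq _ _ (by decide) (by decide)
  have h3 := hf.2 (mkState true true true false true false 0 2) 0 2 1 (by decide) (by decide) (by decide) rfl (by decide)
  rw [e3_0, e3_1] at h3
  have e4_0 : (mkState true true true false true false 1 2).succ 1 2 0 (by decide) = mkState true true true false true false 0 1 := state_eq _ _ (by decide) (by decide)
  have e4_1 : (mkState true true true false true false 1 2).succ 2 1 0 (by decide) = mkState true true true false true true 0 2 := state_eq _ _ (by decide) (by decide)
  have h4 := hf.2 (mkState true true true false true false 1 2) 1 2 0 (by decide) (by decide) (by decide) rfl (by decide)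
  rw [e4_0, e4_1] at h4
  have e5_0 : (mkState true true true false false true 0 1).succ 0 1 2 (by decide) = mkState true true true false false true 0 2 := state_eq _ _ (by decide) (by decide)
  have e5_1 : (mkState true true true false false true 0 1).succ 1 0 2 (by decide) = mkState true true true false false true 1 2 := state_eq _ _ (by decide) (by decide)
  have h5 := hf.2 (mkState true true true false false true 0 1) 0 1 2 (by decide) (by decide) (by decide) rfl (by decide)
  rw [e5_0, e5_1] at h5
  have e6_0 : (mkState true true true true false true 1 2).succ 1 2 0 (by decide) = mkState true true true true true true 0 1 := state_eq _ _ (by decide) (by decide)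
  have e6_1 : (mkState true true true true false true 1 2).succ 2 1 0 (by decide) = mkState true true true true false true 0 2 := state_eq _ _ (by decide) (by decide)
  have h6 := hf.2 (mkState true true true true false true 1 2) 1 2 0 (by decide) (by decide) (by decide) rfl (by decide)
  rw [e6_0, e6_1] at h6
  have e7_0 : (mkState true true true true true false 1 2).succ 1 2 0 (by decide) = mkState true true true true true false 0 1 := state_eq _ _ (by decide) (by decide)
  have e7_1 : (mkState true true true true true false 1 2).succ 2 1 0 (by decide) = mkState true true true true true true 0 2 := state_eq _ _ (by decide) (by decide)
  have h7 := hf.2 (mkState true true true true true false 1 2) 1 2 0 (by decide) (by decide) (by decide) rfl (by decide)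
  rw [e7_0, e7_1] at h7
  have e8_0 : (mkState true true true false true true 0 2).succ 0 2 1 (by decide) = mkState true true true false true true 0 1 := state_eq _ _ (by decide) (by decide)
  have e8_1 : (mkState true true true false true true 0 2).succ 2 0 1 (by decide) = mkState true true true true true true 1 2 := state_eq _ _ (by decide) (by decide)
  have h8 := hf.2 (mkState true true true false true true 0 2) 0 2 1 (by decide) (by decide) (by decide) rfl (by decide)
  rw [e8_0, e8_1] at h8
  have e9_0 : (mkState true true true false false true 1 2).succ 1 2 0 (by decide) = mkState true true true false true true 0 1 := state_eq _ _ (by decide) (by decide)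
  have e9_1 : (mkState true true true false false true 1 2).succ 2 1 0 (by decide) = mkState true true true false false true 0 2 := state_eq _ _ (by decide) (by decide)
  have h9 := hf.2 (mkState true true true false false true 1 2) 1 2 0 (by decide) (by decide) (by decide) rfl (by decide)
  rw [e9_0, e9_1] at h9
  have e10_0 : (mkState true true true true false true 0 2).succ 0 2 1 (by decide) = mkState true true true true false true 0 1 := state_eq _ _ (by decide) (by decide)
  have e10_1 : (mkState true true true true false true 0 2).succ 2 0 1 (by decide) = mkState true true true true false true 1 2 := state_eq _ _ (by decide) (by decide)
  have h10 := hf.2 (mkState true true true true false true 0 2) 0 2 1 (by decide) (by decide) (by decide) rfl (by decide)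
  rw [e10_0, e10_1] at h10
  have e11_0 : (mkState true true true true true false 0 1).succ 0 1 2 (by decide) = mkState true true true true true false 0 2 := state_eq _ _ (by decide) (by decide)
  have e11_1 : (mkState true true true true true false 0 1).succ 1 0 2 (by decide) = mkState true true true true true false 1 2 := state_eq _ _ (by decide) (by decide)
  have h11 := hf.2 (mkState true true true true true false 0 1) 0 1 2 (by decide) (by decide) (by decide) rfl (by decide)
  rw [e11_0, e11_1] at h11
  have e12_0 : (mkState true true true false true true 0 1).succ 0 1 2 (by decide) = mkState true true true false true true 0 2 := state_eq _ _ (by decide) (by decide)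
  have e12_1 : (mkState true true true false true true 0 1).succ 1 0 2 (by decide) = mkState true true true false true true 1 2 := state_eq _ _ (by decide) (by decide)
  have h12 := hf.2 (mkState true true true false true true 0 1) 0 1 2 (by decide) (by decide) (by decide) rfl (by decide)
  rw [e12_0, e12_1] at h12
  have e13_0 : (mkState true true true true false true 0 1).succ 0 1 2 (by decide) = mkState true true true true false true 0 2 := state_eq _ _ (by decide) (by decide)
  have e13_1 : (mkState true true true true false true 0 1).succ 1 0 2 (by decide) = mkState true true true true false true 1 2 := state_eq _ _ (by decide) (by decide)
  have h13 := hf.2 (mkState true true true true false true 0 1) 0 1 2 (by decide) (by decide) (by decide) rfl (by decide)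
  rw [e13_0, e13_1] at h13
  have e14_0 : (mkState true true true true true false 0 2).succ 0 2 1 (by decide) = mkState true true true true true false 0 1 := state_eq _ _ (by decide) (by decide)
  have e14_1 : (mkState true true true true true false 0 2).succ 2 0 1 (by decide) = mkState true true true true true false 1 2 := state_eq _ _ (by decide) (by decide)
  have h14 := hf.2 (mkState true true true true true false 0 2) 0 2 1 (by decide) (by decide) (by decide) rfl (by decide)
  rw [e14_0, e14_1] at h14
  have e15_0 : (mkState true true true false true true 1 2).succ 1 2 0 (by decide) = mkState true true true false true true 0 1 := state_eq _ _ (by decide) (by decide)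
  have e15_1 : (mkState true true true false true true 1 2).succ 2 1 0 (by decide) = mkState true true true false true true 0 2 := state_eq _ _ (by decide) (by decide)
  have h15 := hf.2 (mkState true true true false true true 1 2) 1 2 0 (by decide) (by decide) (by decide) rfl (by decide)
  rw [e15_0, e15_1] at h15
  have ht0 : f (mkState true true true true true true 0 1) = 0 := hf.1 _ (by decide)
  have ht1 : f (mkState true true true true true true 0 2) = 0 := hf.1 _ (by decide)
  have ht2 : f (mkState true true true true true true 1 2) = 0 := hf.1 _ (by decide)
  linarith
end

section
/- There exists a unique second-order function g relative to the unique value function f of the 3PG (i.e., a unique g with g(S) = 0 for terminal S and g(S) = (f(S₁) − f(S₂))²/2 + (g(S₁) + g(S₂))/2 for non-terminal S with successors S₁, S₂), and it satisfies g(111110 | {2,3}) = 40, g(111110 | {1,2}) = 44, and g(111110 | {1,3}) = 44. -/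
/-- `g` is a second-order (variance) function relative to `f`: it vanishes on
terminal states and satisfies
`g S = (f S₁ - f S₂)² / 2 + (g S₁ + g S₂) / 2` on non-terminal states. -/
def IsSecondOrderFn (f g : PGState → ℝ) : Prop :=
  (∀ S : PGState, S.Terminal → g S = 0) ∧
  ∀ (S : PGState) (t₁ t₂ t₃ : Fin 3) (_ : t₁ ≠ t₂) (h₁₃ : t₁ ≠ t₃) (h₂₃ : t₂ ≠ t₃),
    S.ring = {t₁, t₂} → ¬ S.Terminal →
    g S = (f (S.succ t₁ t₂ t₃ h₁₃) - f (S.succ t₂ t₁ t₃ h₂₃)) ^ 2 / 2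
        + (g (S.succ t₁ t₂ t₃ h₁₃) + g (S.succ t₂ t₁ t₃ h₂₃)) / 2

def fqN : Bool → Bool → Bool → Bool → Bool → Bool → Fin 3 → ℤ
  | false, false, false, false, false, false, p => if p = 0 then 744 else if p = 1 then 744 else 744
  | true, false, false, false, false, false, p => if p = 0 then 698 else if p = 1 then 684 else 721
  | false, true, false, false, false, false, p => if p = 0 then 684 else if p = 1 then 698 else 721
  | true, true, false, false, false, false, p => if p = 0 then 638 else if p = 1 then 638 else 698
  | false, false, true, false, false, false, p => if p = 0 then 698 else if p = 1 then 721 else 684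
  | true, false, true, false, false, false, p => if p = 0 then 612 else if p = 1 then 636 else 636
  | false, true, true, false, false, false, p => if p = 0 then 612 else if p = 1 then 662 else 652
  | true, true, true, false, false, false, p => if p = 0 then 516 else if p = 1 then 572 else 604
  | false, false, false, true, false, false, p => if p = 0 then 684 else if p = 1 then 721 else 698
  | true, false, false, true, false, false, p => if p = 0 then 612 else if p = 1 then 652 else 662
  | false, true, false, true, false, false, p => if p = 0 then 624 else if p = 1 then 675 else 675
  | true, true, false, true, false, false, p => if p = 0 then 552 else if p = 1 then 606 else 639
  | false, false, true, true, false, false, p => if p = 0 then 638 else if p = 1 then 698 else 638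
  | true, false, true, true, false, false, p => if p = 0 then 516 else if p = 1 then 604 else 572
  | false, true, true, true, false, false, p => if p = 0 then 552 else if p = 1 then 639 else 606
  | true, true, true, true, false, false, p => if p = 0 then 420 else if p = 1 then 540 else 540
  | false, false, false, false, true, false, p => if p = 0 then 721 else if p = 1 then 698 else 684
  | true, false, false, false, true, false, p => if p = 0 then 662 else if p = 1 then 612 else 652
  | false, true, false, false, true, false, p => if p = 0 then 636 else if p = 1 then 612 else 636
  | true, true, false, false, true, false, p => if p = 0 then 572 else if p = 1 then 516 else 604
  | false, false, true, false, true, false, p => if p = 0 then 675 else if p = 1 then 675 else 624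
  | true, false, true, false, true, false, p => if p = 0 then 576 else if p = 1 then 564 else 552
  | false, true, true, false, true, false, p => if p = 0 then 564 else if p = 1 then 576 else 552
  | true, true, true, false, true, false, p => if p = 0 then 420 else if p = 1 then 420 else 480
  | false, false, false, true, true, false, p => if p = 0 then 652 else if p = 1 then 662 else 612
  | true, false, false, true, true, false, p => if p = 0 then 552 else if p = 1 then 552 else 552
  | false, true, false, true, true, false, p => if p = 0 then 552 else if p = 1 then 576 else 564
  | true, true, false, true, true, false, p => if p = 0 then 432 else if p = 1 then 456 else 504
  | false, false, true, true, true, false, p => if p = 0 then 606 else if p = 1 then 639 else 552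
  | true, false, true, true, true, false, p => if p = 0 then 456 else if p = 1 then 504 else 432
  | false, true, true, true, true, false, p => if p = 0 then 480 else if p = 1 then 540 else 480
  | true, true, true, true, true, false, p => if p = 0 then 240 else if p = 1 then 360 else 360
  | false, false, false, false, false, true, p => if p = 0 then 721 else if p = 1 then 684 else 698
  | true, false, false, false, false, true, p => if p = 0 then 675 else if p = 1 then 624 else 675
  | false, true, false, false, false, true, p => if p = 0 then 652 else if p = 1 then 612 else 662
  | true, true, false, false, false, true, p => if p = 0 then 606 else if p = 1 then 552 else 639
  | false, false, true, false, false, true, p => if p = 0 then 662 else if p = 1 then 652 else 612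
  | true, false, true, false, false, true, p => if p = 0 then 576 else if p = 1 then 552 else 564
  | false, true, true, false, false, true, p => if p = 0 then 552 else if p = 1 then 552 else 552
  | true, true, true, false, false, true, p => if p = 0 then 456 else if p = 1 then 432 else 504
  | false, false, false, true, false, true, p => if p = 0 then 636 else if p = 1 then 636 else 612
  | true, false, false, true, false, true, p => if p = 0 then 564 else if p = 1 then 552 else 576
  | false, true, false, true, false, true, p => if p = 0 then 552 else if p = 1 then 564 else 576
  | true, true, false, true, false, true, p => if p = 0 then 480 else if p = 1 then 480 else 540
  | false, false, true, true, false, true, p => if p = 0 then 572 else if p = 1 then 604 else 516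
  | true, false, true, true, false, true, p => if p = 0 then 420 else if p = 1 then 480 else 420
  | false, true, true, true, false, true, p => if p = 0 then 432 else if p = 1 then 504 else 456
  | true, true, true, true, false, true, p => if p = 0 then 240 else if p = 1 then 360 else 360
  | false, false, false, false, true, true, p => if p = 0 then 698 else if p = 1 then 638 else 638
  | true, false, false, false, true, true, p => if p = 0 then 639 else if p = 1 then 552 else 606
  | false, true, false, false, true, true, p => if p = 0 then 604 else if p = 1 then 516 else 572
  | true, true, false, false, true, true, p => if p = 0 then 540 else if p = 1 then 420 else 540
  | false, false, true, false, true, true, p => if p = 0 then 639 else if p = 1 then 606 else 552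
  | true, false, true, false, true, true, p => if p = 0 then 540 else if p = 1 then 480 else 480
  | false, true, true, false, true, true, p => if p = 0 then 504 else if p = 1 then 456 else 432
  | true, true, true, false, true, true, p => if p = 0 then 360 else if p = 1 then 240 else 360
  | false, false, false, true, true, true, p => if p = 0 then 604 else if p = 1 then 572 else 516
  | true, false, false, true, true, true, p => if p = 0 then 504 else if p = 1 then 432 else 456
  | false, true, false, true, true, true, p => if p = 0 then 480 else if p = 1 then 420 else 420
  | true, true, false, true, true, true, p => if p = 0 then 360 else if p = 1 then 240 else 360
  | false, false, true, true, true, true, p => if p = 0 then 540 else if p = 1 then 540 else 420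
  | true, false, true, true, true, true, p => if p = 0 then 360 else if p = 1 then 360 else 240
  | false, true, true, true, true, true, p => if p = 0 then 360 else if p = 1 then 360 else 240
  | true, true, true, true, true, true, p => if p = 0 then 0 else if p = 1 then 0 else 0

def gqN : Bool → Bool → Bool → Bool → Bool → Bool → Fin 3 → ℤ
  | false, false, false, false, false, false, p => if p = 0 then 217152 else if p = 1 then 217152 else 217152
  | true, false, false, false, false, false, p => if p = 0 then 205320 else if p = 1 then 217152 else 206774
  | false, true, false, false, false, false, p => if p = 0 then 217152 else if p = 1 then 205320 else 206774
  | true, true, false, false, false, false, p => if p = 0 then 194280 else if p = 1 then 194280 else 194280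
  | false, false, true, false, false, false, p => if p = 0 then 205320 else if p = 1 then 206774 else 217152
  | true, false, true, false, false, false, p => if p = 0 then 212544 else if p = 1 then 218304 else 218304
  | false, true, true, false, false, false, p => if p = 0 then 215424 else if p = 1 then 200424 else 207104
  | true, true, true, false, false, false, p => if p = 0 then 203904 else if p = 1 then 197184 else 202112
  | false, false, false, true, false, false, p => if p = 0 then 217152 else if p = 1 then 206774 else 205320
  | true, false, false, true, false, false, p => if p = 0 then 215424 else if p = 1 then 207104 else 200424
  | false, true, false, true, false, false, p => if p = 0 then 202752 else if p = 1 then 190710 else 190710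
  | true, true, false, true, false, false, p => if p = 0 then 183744 else if p = 1 then 178344 else 182502
  | false, false, true, true, false, false, p => if p = 0 then 194280 else if p = 1 then 194280 else 194280
  | true, false, true, true, false, false, p => if p = 0 then 203904 else if p = 1 then 202112 else 197184
  | false, true, true, true, false, false, p => if p = 0 then 183744 else if p = 1 then 182502 else 178344
  | true, true, true, true, false, false, p => if p = 0 then 158400 else if p = 1 then 172800 else 172800
  | false, false, false, false, true, false, p => if p = 0 then 206774 else if p = 1 then 205320 else 217152
  | true, false, false, false, true, false, p => if p = 0 then 200424 else if p = 1 then 215424 else 207104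
  | false, true, false, false, true, false, p => if p = 0 then 218304 else if p = 1 then 212544 else 218304
  | true, true, false, false, true, false, p => if p = 0 then 197184 else if p = 1 then 203904 else 202112
  | false, false, true, false, true, false, p => if p = 0 then 190710 else if p = 1 then 190710 else 202752
  | true, false, true, false, true, false, p => if p = 0 then 195264 else if p = 1 then 202752 else 212544
  | false, true, true, false, true, false, p => if p = 0 then 202752 else if p = 1 then 195264 else 212544
  | true, true, true, false, true, false, p => if p = 0 then 201600 else if p = 1 then 201600 else 201600
  | false, false, false, true, true, false, p => if p = 0 then 207104 else if p = 1 then 200424 else 215424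
  | true, false, false, true, true, false, p => if p = 0 then 218304 else if p = 1 then 218304 else 218304
  | false, true, false, true, true, false, p => if p = 0 then 212544 else if p = 1 then 195264 else 202752
  | true, true, false, true, true, false, p => if p = 0 then 203904 else if p = 1 then 183744 else 194112
  | false, false, true, true, true, false, p => if p = 0 then 178344 else if p = 1 then 182502 else 183744
  | true, false, true, true, true, false, p => if p = 0 then 183744 else if p = 1 then 194112 else 203904
  | false, true, true, true, true, false, p => if p = 0 then 172800 else if p = 1 then 172800 else 172800
  | true, true, true, true, true, false, p => if p = 0 then 144000 else if p = 1 then 158400 else 158400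
  | false, false, false, false, false, true, p => if p = 0 then 206774 else if p = 1 then 217152 else 205320
  | true, false, false, false, false, true, p => if p = 0 then 190710 else if p = 1 then 202752 else 190710
  | false, true, false, false, false, true, p => if p = 0 then 207104 else if p = 1 then 215424 else 200424
  | true, true, false, false, false, true, p => if p = 0 then 178344 else if p = 1 then 183744 else 182502
  | false, false, true, false, false, true, p => if p = 0 then 200424 else if p = 1 then 207104 else 215424
  | true, false, true, false, false, true, p => if p = 0 then 195264 else if p = 1 then 212544 else 202752
  | false, true, true, false, false, true, p => if p = 0 then 218304 else if p = 1 then 218304 else 218304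
  | true, true, true, false, false, true, p => if p = 0 then 183744 else if p = 1 then 203904 else 194112
  | false, false, false, true, false, true, p => if p = 0 then 218304 else if p = 1 then 218304 else 212544
  | true, false, false, true, false, true, p => if p = 0 then 202752 else if p = 1 then 212544 else 195264
  | false, true, false, true, false, true, p => if p = 0 then 212544 else if p = 1 then 202752 else 195264
  | true, true, false, true, false, true, p => if p = 0 then 172800 else if p = 1 then 172800 else 172800
  | false, false, true, true, false, true, p => if p = 0 then 197184 else if p = 1 then 202112 else 203904
  | true, false, true, true, false, true, p => if p = 0 then 201600 else if p = 1 then 201600 else 201600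
  | false, true, true, true, false, true, p => if p = 0 then 203904 else if p = 1 then 194112 else 183744
  | true, true, true, true, false, true, p => if p = 0 then 144000 else if p = 1 then 158400 else 158400
  | false, false, false, false, true, true, p => if p = 0 then 194280 else if p = 1 then 194280 else 194280
  | true, false, false, false, true, true, p => if p = 0 then 182502 else if p = 1 then 183744 else 178344
  | false, true, false, false, true, true, p => if p = 0 then 202112 else if p = 1 then 203904 else 197184
  | true, true, false, false, true, true, p => if p = 0 then 172800 else if p = 1 then 158400 else 172800
  | false, false, true, false, true, true, p => if p = 0 then 182502 else if p = 1 then 178344 else 183744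
  | true, false, true, false, true, true, p => if p = 0 then 172800 else if p = 1 then 172800 else 172800
  | false, true, true, false, true, true, p => if p = 0 then 194112 else if p = 1 then 183744 else 203904
  | true, true, true, false, true, true, p => if p = 0 then 158400 else if p = 1 then 144000 else 158400
  | false, false, false, true, true, true, p => if p = 0 then 202112 else if p = 1 then 197184 else 203904
  | true, false, false, true, true, true, p => if p = 0 then 194112 else if p = 1 then 203904 else 183744
  | false, true, false, true, true, true, p => if p = 0 then 201600 else if p = 1 then 201600 else 201600
  | true, true, false, true, true, true, p => if p = 0 then 158400 else if p = 1 then 144000 else 158400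
  | false, false, true, true, true, true, p => if p = 0 then 172800 else if p = 1 then 172800 else 158400
  | true, false, true, true, true, true, p => if p = 0 then 158400 else if p = 1 then 158400 else 144000
  | false, true, true, true, true, true, p => if p = 0 then 158400 else if p = 1 then 158400 else 144000
  | true, true, true, true, true, true, p => if p = 0 then 0 else if p = 1 then 0 else 0


def ub (b : Bool) (i j w l : Fin 3) : Bool := if i = w ∧ j = l then true else b

theorem Hfchk : ∀ (b1 b2 b3 b4 b5 b6 : Bool) (t1 t2 t3 : Fin 3), t1 ≠ t2 → t1 ≠ t3 → t2 ≠ t3 →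
    ¬(b1 = true ∧ b2 = true ∧ b3 = true ∧ b4 = true ∧ b5 = true ∧ b6 = true) →
    2 * fqN b1 b2 b3 b4 b5 b6 t3 = 120
      + fqN (ub b1 0 1 t1 t2) (ub b2 1 0 t1 t2) (ub b3 0 2 t1 t2) (ub b4 2 0 t1 t2) (ub b5 1 2 t1 t2) (ub b6 2 1 t1 t2) t2
      + fqN (ub b1 0 1 t2 t1) (ub b2 1 0 t2 t1) (ub b3 0 2 t2 t1) (ub b4 2 0 t2 t1) (ub b5 1 2 t2 t1) (ub b6 2 1 t2 t1) t1 := by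
  decide

theorem Hgchk : ∀ (b1 b2 b3 b4 b5 b6 : Bool) (t1 t2 t3 : Fin 3), t1 ≠ t2 → t1 ≠ t3 → t2 ≠ t3 →
    ¬(b1 = true ∧ b2 = true ∧ b3 = true ∧ b4 = true ∧ b5 = true ∧ b6 = true) →
    2 * gqN b1 b2 b3 b4 b5 b6 t3 =
      (fqN (ub b1 0 1 t1 t2) (ub b2 1 0 t1 t2) (ub b3 0 2 t1 t2) (ub b4 2 0 t1 t2) (ub b5 1 2 t1 t2) (ub b6 2 1 t1 t2) t2
       - fqN (ub b1 0 1 t2 t1) (ub b2 1 0 t2 t1) (ub b3 0 2 t2 t1) (ub b4 2 0 t2 t1) (ub b5 1 2 t2 t1) (ub b6 2 1 t2 t1) t1) ^ 2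
      + gqN (ub b1 0 1 t1 t2) (ub b2 1 0 t1 t2) (ub b3 0 2 t1 t2) (ub b4 2 0 t1 t2) (ub b5 1 2 t1 t2) (ub b6 2 1 t1 t2) t2
      + gqN (ub b1 0 1 t2 t1) (ub b2 1 0 t2 t1) (ub b3 0 2 t2 t1) (ub b4 2 0 t2 t1) (ub b5 1 2 t2 t1) (ub b6 2 1 t2 t1) t1 := by
  decide

/-- the player outside the ring -/
def out (r : Finset (Fin 3)) : Fin 3 :=
  if (0 : Fin 3) ∉ r then 0 else if (1 : Fin 3) ∉ r then 1 else 2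

theorem out_pair : ∀ t1 t2 t3 : Fin 3, t1 ≠ t2 → t1 ≠ t3 → t2 ≠ t3 →
    out ({t1, t2} : Finset (Fin 3)) = t3 := by decide

noncomputable def Fval (S : PGState) : ℝ :=
  ((fqN (S.beats 0 1) (S.beats 1 0) (S.beats 0 2) (S.beats 2 0) (S.beats 1 2) (S.beats 2 1)
    (out S.ring) : ℤ) : ℝ) / 60

noncomputable def Gval (S : PGState) : ℝ :=
  ((gqN (S.beats 0 1) (S.beats 1 0) (S.beats 0 2) (S.beats 2 0) (S.beats 1 2) (S.beats 2 1)
    (out S.ring) : ℤ) : ℝ) / 3600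

theorem terminal_iff (S : PGState) : S.Terminal ↔
    (S.beats 0 1 = true ∧ S.beats 1 0 = true ∧ S.beats 0 2 = true ∧ S.beats 2 0 = true ∧
     S.beats 1 2 = true ∧ S.beats 2 1 = true) := by
  constructor
  · intro h
    exact ⟨h 0 1 (by decide), h 1 0 (by decide), h 0 2 (by decide), h 2 0 (by decide),
      h 1 2 (by decide), h 2 1 (by decide)⟩
  · rintro ⟨h1, h2, h3, h4, h5, h6⟩ i j hij
    fin_cases i <;> fin_cases j <;> simp_all

theorem succ_beats (S : PGState) (w l t : Fin 3) (h : w ≠ t) (i j : Fin 3) :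
    (S.succ w l t h).beats i j = ub (S.beats i j) i j w l := rfl

theorem succ_ring (S : PGState) (w l t : Fin 3) (h : w ≠ t) :
    (S.succ w l t h).ring = {w, t} := rfl

theorem F_isValueFn : IsValueFn Fval := by
  constructor
  · intro S hS
    rw [terminal_iff] at hS
    obtain ⟨h1, h2, h3, h4, h5, h6⟩ := hS
    have hz : ∀ p : Fin 3, fqN true true true true true true p = 0 := by decide
    simp [Fval, h1, h2, h3, h4, h5, h6, hz]
  · intro S t1 t2 t3 h12 h13 h23 hr hterm
    have hnt : ¬(S.beats 0 1 = true ∧ S.beats 1 0 = true ∧ S.beats 0 2 = true ∧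
        S.beats 2 0 = true ∧ S.beats 1 2 = true ∧ S.beats 2 1 = true) := by
      rw [← terminal_iff]; exact hterm
    have key := Hfchk (S.beats 0 1) (S.beats 1 0) (S.beats 0 2) (S.beats 2 0)
      (S.beats 1 2) (S.beats 2 1) t1 t2 t3 h12 h13 h23 hnt
    apply_fun (fun z : ℤ => (z : ℝ)) at key
    push_cast at key
    simp only [Fval, succ_beats, succ_ring, hr,
      out_pair t1 t2 t3 h12 h13 h23, out_pair t1 t3 t2 h13 h12 (Ne.symm h23),
      out_pair t2 t3 t1 h23 (Ne.symm h12) (Ne.symm h13)]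
    linarith

theorem G_isSecondOrderFn : IsSecondOrderFn Fval Gval := by
  constructor
  · intro S hS
    rw [terminal_iff] at hS
    obtain ⟨h1, h2, h3, h4, h5, h6⟩ := hS
    have hz : ∀ p : Fin 3, gqN true true true true true true p = 0 := by decide
    simp [Gval, h1, h2, h3, h4, h5, h6, hz]
  · intro S t1 t2 t3 h12 h13 h23 hr hterm
    have hnt : ¬(S.beats 0 1 = true ∧ S.beats 1 0 = true ∧ S.beats 0 2 = true ∧
        S.beats 2 0 = true ∧ S.beats 1 2 = true ∧ S.beats 2 1 = true) := by
      rw [← terminal_iff]; exact hterm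
    have key := Hgchk (S.beats 0 1) (S.beats 1 0) (S.beats 0 2) (S.beats 2 0)
      (S.beats 1 2) (S.beats 2 1) t1 t2 t3 h12 h13 h23 hnt
    apply_fun (fun z : ℤ => (z : ℝ)) at key
    push_cast at key
    simp only [Fval, Gval, succ_beats, succ_ring, hr,
      out_pair t1 t2 t3 h12 h13 h23, out_pair t1 t3 t2 h13 h12 (Ne.symm h23),
      out_pair t2 t3 t1 h23 (Ne.symm h12) (Ne.symm h13)]
    linear_combination key / 7200

instance : Finite PGState := by
  apply Finite.of_injective (fun S : PGState => (S.beats, S.ring))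
  rintro ⟨b, r, h⟩ ⟨b', r', h'⟩ e
  simp only [Prod.mk.injEq] at e
  obtain ⟨rfl, rfl⟩ := e
  rfl

instance : Nonempty PGState := ⟨mkState false false false false false false 0 1⟩

def nmiss (S : PGState) : ℕ :=
  (Finset.univ.filter (fun p : Fin 3 × Fin 3 => p.1 ≠ p.2 ∧ S.beats p.1 p.2 = false)).card

def ringDone (S : PGState) : Prop :=
  ∀ i ∈ S.ring, ∀ j ∈ S.ring, i ≠ j → S.beats i j = true

instance : DecidablePred ringDone := fun S => by unfold ringDone; infer_instance

def meas (S : PGState) : ℕ := 2 * nmiss S + (if ringDone S then 1 else 0)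

theorem succ_beats_false (S : PGState) (w l t : Fin 3) (h : w ≠ t) (i j : Fin 3)
    (hb : (S.succ w l t h).beats i j = false) : S.beats i j = false := by
  rw [succ_beats, ub] at hb
  by_cases hc : i = w ∧ j = l
  · simp [hc] at hb
  · simpa [hc] using hb

theorem nmiss_succ_le (S : PGState) (w l t : Fin 3) (h : w ≠ t) :
    nmiss (S.succ w l t h) ≤ nmiss S := by
  apply Finset.card_le_card
  intro p hp
  simp only [Finset.mem_filter, Finset.mem_univ, true_and] at hp ⊢
  exact ⟨hp.1, succ_beats_false S w l t h p.1 p.2 hp.2⟩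

theorem nmiss_succ_lt (S : PGState) (w l t : Fin 3) (h : w ≠ t) (hwl : w ≠ l)
    (hb : S.beats w l = false) : nmiss (S.succ w l t h) < nmiss S := by
  apply Finset.card_lt_card
  constructor
  · intro p hp
    simp only [Finset.mem_filter, Finset.mem_univ, true_and] at hp ⊢
    exact ⟨hp.1, succ_beats_false S w l t h p.1 p.2 hp.2⟩
  · intro hsub
    have hmem : (w, l) ∈ Finset.univ.filter
        (fun p : Fin 3 × Fin 3 => p.1 ≠ p.2 ∧ S.beats p.1 p.2 = false) := by
      simp [hwl, hb]
    have h2 := hsub hmem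
    simp only [Finset.mem_filter, Finset.mem_univ, true_and] at h2
    have h3 : (S.succ w l t h).beats w l = false := h2.2
    rw [succ_beats, ub] at h3
    simp at h3

theorem fin3_cases : ∀ t1 t2 t3 x : Fin 3, t1 ≠ t2 → t1 ≠ t3 → t2 ≠ t3 →
    x = t1 ∨ x = t2 ∨ x = t3 := by decide

theorem exists_succ_meas_lt (S : PGState) (t1 t2 t3 : Fin 3)
    (h12 : t1 ≠ t2) (h13 : t1 ≠ t3) (h23 : t2 ≠ t3)
    (hr : S.ring = {t1, t2}) (hterm : ¬ S.Terminal) :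
    meas (S.succ t1 t2 t3 h13) < meas S ∨ meas (S.succ t2 t1 t3 h23) < meas S := by
  have hm : 2 * nmiss S ≤ meas S := by unfold meas; omega
  by_cases hb1 : S.beats t1 t2 = false
  · left
    have h1 : nmiss (S.succ t1 t2 t3 h13) < nmiss S := nmiss_succ_lt S t1 t2 t3 h13 h12 hb1
    unfold meas
    split <;> omega
  · by_cases hb2 : S.beats t2 t1 = false
    · right
      have h1 : nmiss (S.succ t2 t1 t3 h23) < nmiss S :=
        nmiss_succ_lt S t2 t1 t3 h23 (Ne.symm h12) hb2
      unfold meas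
      split <;> omega
    · -- both bits inside the ring are set
      have hb1' : S.beats t1 t2 = true := by revert hb1; cases S.beats t1 t2 <;> simp
      have hb2' : S.beats t2 t1 = true := by revert hb2; cases S.beats t2 t1 <;> simp
      have hdone : ringDone S := by
        intro i hi j hj hij
        rw [hr] at hi hj
        simp only [Finset.mem_insert, Finset.mem_singleton] at hi hj
        rcases hi with rfl | rfl <;> rcases hj with rfl | rfl <;>
          first | exact absurd rfl hij | assumption
      have hmeasS : meas S = 2 * nmiss S + 1 := by unfold meas; simp [hdone]
      -- a missing pair exists
      have hex : ∃ a b : Fin 3, a ≠ b ∧ S.beats a b = false := by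
        by_contra hc
        push_neg at hc
        exact hterm (fun i j hij => by
          have h4 := hc i j hij
          revert h4; cases S.beats i j <;> simp)
      obtain ⟨a, b, hab, hfb⟩ := hex
      -- helper: a successor whose ring contains a missing pair has small meas
      have step : ∀ (w l : Fin 3) (hw : w ≠ t3) (u v : Fin 3), u ≠ v → S.beats u v = false →
          ¬(u = w ∧ v = l) → u ∈ ({w, t3} : Finset (Fin 3)) → v ∈ ({w, t3} : Finset (Fin 3)) →
          meas (S.succ w l t3 hw) < meas S := by
        intro w l hw u v huv hf hne hu hv
        have hnd : ¬ ringDone (S.succ w l t3 hw) := by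
          intro hd
          have h5 := hd u (by rw [succ_ring]; exact hu) v (by rw [succ_ring]; exact hv) huv
          rw [succ_beats, ub, if_neg hne, hf] at h5
          exact Bool.false_ne_true h5
        have hms : meas (S.succ w l t3 hw) = 2 * nmiss (S.succ w l t3 hw) := by
          unfold meas; simp [hnd]
        have hle := nmiss_succ_le S w l t3 hw
        omega
      rcases fin3_cases t1 t2 t3 a h12 h13 h23 with ha | ha | ha <;>
        rcases fin3_cases t1 t2 t3 b h12 h13 h23 with hb | hb | hb <;>
        rw [ha, hb] at hab hfb
      · exact absurd rfl hab
      · rw [hb1'] at hfb; exact absurd hfb (by simp)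
      · exact Or.inl (step t1 t2 h13 t1 t3 hab hfb
          (fun hc => h23 hc.2.symm) (by simp) (by simp))
      · rw [hb2'] at hfb; exact absurd hfb (by simp)
      · exact absurd rfl hab
      · exact Or.inr (step t2 t1 h23 t2 t3 hab hfb
          (fun hc => h13 hc.2.symm) (by simp) (by simp))
      · exact Or.inl (step t1 t2 h13 t3 t1 hab hfb
          (fun hc => h13 hc.1.symm) (by simp) (by simp))
      · exact Or.inr (step t2 t1 h23 t3 t2 hab hfb
          (fun hc => h23 hc.1.symm) (by simp) (by simp))
      · exact absurd rfl hab

theorem homog_zero (h : PGState → ℝ)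
    (h0 : ∀ S, S.Terminal → h S = 0)
    (hrec : ∀ (S : PGState) (t1 t2 t3 : Fin 3) (h12 : t1 ≠ t2) (h13 : t1 ≠ t3) (h23 : t2 ≠ t3),
      S.ring = {t1, t2} → ¬ S.Terminal →
      h S = (h (S.succ t1 t2 t3 h13) + h (S.succ t2 t1 t3 h23)) / 2) :
    ∀ S, h S = 0 := by
  obtain ⟨S0, hS0⟩ := Finite.exists_max (fun S : PGState => |h S|)
  by_cases hM : |h S0| ≤ 0
  · intro S
    have h1 : |h S| ≤ 0 := le_trans (hS0 S) hM
    exact abs_eq_zero.mp (le_antisymm h1 (abs_nonneg _))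
  push_neg at hM
  exfalso
  have hne : Nonempty {T : PGState // |h T| = |h S0|} := ⟨⟨S0, rfl⟩⟩
  obtain ⟨⟨S, hSM⟩, hmin⟩ := Finite.exists_min
    (fun T : {T : PGState // |h T| = |h S0|} => meas T.1)
  have hterm : ¬ S.Terminal := by
    intro ht
    rw [h0 S ht, abs_zero] at hSM
    rw [← hSM] at hM
    exact lt_irrefl 0 hM
  obtain ⟨t1, t2, h12, hr⟩ := Finset.card_eq_two.mp S.card_ring
  obtain ⟨t3, h13, h23⟩ :=
    (show ∀ a b : Fin 3, a ≠ b → ∃ c, a ≠ c ∧ b ≠ c by decide) t1 t2 h12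
  have heq := hrec S t1 t2 t3 h12 h13 h23 hr hterm
  set S1 := S.succ t1 t2 t3 h13 with hS1
  set S2 := S.succ t2 t1 t3 h23 with hS2
  have h1le : |h S1| ≤ |h S0| := hS0 S1
  have h2le : |h S2| ≤ |h S0| := hS0 S2
  have habs : |h S| ≤ (|h S1| + |h S2|) / 2 := by
    rw [heq, abs_div]
    have h2 : |(2:ℝ)| = 2 := by norm_num
    rw [h2]
    have h3 := abs_add_le (h S1) (h S2)
    linarith
  have h1M : |h S1| = |h S0| := by
    by_contra hne
    have hlt : |h S1| < |h S0| := lt_of_le_of_ne h1le hne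
    rw [hSM] at habs; linarith
  have h2M : |h S2| = |h S0| := by
    by_contra hne
    have hlt : |h S2| < |h S0| := lt_of_le_of_ne h2le hne
    rw [hSM] at habs; linarith
  rcases exists_succ_meas_lt S t1 t2 t3 h12 h13 h23 hr hterm with hlt | hlt
  · have hge : meas S ≤ meas S1 := hmin ⟨S1, h1M⟩
    rw [hS1] at hge
    omega
  · have hge : meas S ≤ meas S2 := hmin ⟨S2, h2M⟩
    rw [hS2] at hge
    omega

/-- There is a unique second-order function `g` relative to the value function `f`
of the 3PG, and it satisfies `g(111110|{2,3}) = 40`, `g(111110|{1,2}) = 44`,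
`g(111110|{1,3}) = 44`. -/
theorem threePG_secondOrder (f : PGState → ℝ) (hf : IsValueFn f) :
    (∃! g : PGState → ℝ, IsSecondOrderFn f g) ∧
    ∀ g : PGState → ℝ, IsSecondOrderFn f g →
      g (mkState true true true true true false 1 2) = 40 ∧
      g (mkState true true true true true false 0 1) = 44 ∧
      g (mkState true true true true true false 0 2) = 44 := by
  have hfF : ∀ S, f S = Fval S := by
    intro S
    have hz := homog_zero (fun T => f T - Fval T)
      (fun T hT => by show f T - Fval T = 0; rw [hf.1 T hT, F_isValueFn.1 T hT]; ring)
      (fun T t1 t2 t3 h12 h13 h23 hr ht => by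
        have e1 := hf.2 T t1 t2 t3 h12 h13 h23 hr ht
        have e2 := F_isValueFn.2 T t1 t2 t3 h12 h13 h23 hr ht
        show _ - _ = ((_ - _) + (_ - _)) / 2
        linarith) S
    have hz' : f S - Fval S = 0 := hz
    linarith
  have hGf : IsSecondOrderFn f Gval := by
    refine ⟨G_isSecondOrderFn.1, ?_⟩
    intro S t1 t2 t3 h12 h13 h23 hr ht
    rw [hfF, hfF]
    exact G_isSecondOrderFn.2 S t1 t2 t3 h12 h13 h23 hr ht
  have huniq : ∀ g : PGState → ℝ, IsSecondOrderFn f g → g = Gval := by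
    intro g hg
    funext S
    have hz := homog_zero (fun T => g T - Gval T)
      (fun T hT => by show g T - Gval T = 0; rw [hg.1 T hT, hGf.1 T hT]; ring)
      (fun T t1 t2 t3 h12 h13 h23 hr ht => by
        have e1 := hg.2 T t1 t2 t3 h12 h13 h23 hr ht
        have e2 := hGf.2 T t1 t2 t3 h12 h13 h23 hr ht
        show _ - _ = ((_ - _) + (_ - _)) / 2
        linarith) S
    have hz' : g S - Gval S = 0 := hz
    linarith
  refine ⟨⟨Gval, hGf, huniq⟩, ?_⟩
  intro g hg
  rw [huniq g hg]
  refine ⟨?_, ?_, ?_⟩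
  · have e1 : gqN ((mkState true true true true true false 1 2).beats 0 1)
        ((mkState true true true true true false 1 2).beats 1 0)
        ((mkState true true true true true false 1 2).beats 0 2)
        ((mkState true true true true true false 1 2).beats 2 0)
        ((mkState true true true true true false 1 2).beats 1 2)
        ((mkState true true true true true false 1 2).beats 2 1)
        (out (mkState true true true true true false 1 2).ring) = 144000 := by decide
    simp only [Gval, e1]
    norm_num
  · have e1 : gqN ((mkState true true true true true false 0 1).beats 0 1)
        ((mkState true true true true true false 0 1).beats 1 0)
        ((mkState true true true true true false 0 1).beats 0 2)
        ((mkState true true true true true false 0 1).beats 2 0)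
        ((mkState true true true true true false 0 1).beats 1 2)
        ((mkState true true true true true false 0 1).beats 2 1)
        (out (mkState true true true true true false 0 1).ring) = 158400 := by decide
    simp only [Gval, e1]
    norm_num
  · have e1 : gqN ((mkState true true true true true false 0 2).beats 0 1)
        ((mkState true true true true true false 0 2).beats 1 0)
        ((mkState true true true true true false 0 2).beats 0 2)
        ((mkState true true true true true false 0 2).beats 2 0)
        ((mkState true true true true true false 0 2).beats 1 2)
        ((mkState true true true true true false 0 2).beats 2 1)
        (out (mkState true true true true true false 0 2).ring) = 158400 := by decide
    simp only [Gval, e1]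
    norm_num
end
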